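/- arXiv:1907.02401 — 2 statements merged into one kernel-verified Lean document; each statement's English description precedes it below -/
import Mathlib

section
/- Let h : ℝⁿ → ℝᵐ and g : ℝⁿ → ℝᵖ be continuously differentiable, let [ℓ,u] ⊆ ℝⁿ be a compact box, let λ_min < λ_max and μ_max > 0, and let c_lips > 0 be such that ‖∇h(x)‖·‖λ‖ + ‖∇g(x)‖·‖μ‖ ≤ c_lips for all x ∈ [ℓ,u], λ ∈ [λ_min,λ_max]ᵐ, μ ∈ [0,μ_max]ᵖ. Then for all x ∈ [ℓ,u], λ ∈ [λ_min,λ_max]ᵐ, μ ∈ [0,μ_max]ᵖ, and ρ > 0, one has ‖P_{[ℓ,u]}(x − ∇[‖h(x)‖² + ‖g(x)_+‖²]) − x‖ ≤ ‖P_{[ℓ,u]}(x − ∇[‖h(x) + λ/ρ‖² + ‖(g(x) + μ/ρ)_+‖²]) − x‖ + 2 c_lips/ρ, where the gradients are taken with respect to x. -/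
/-- Componentwise Euclidean projection onto the box `[ℓ,u] ⊆ ℝⁿ`. -/
noncomputable def boxProj {n : ℕ} (l u x : EuclideanSpace ℝ (Fin n)) :
    EuclideanSpace ℝ (Fin n) :=
  (WithLp.equiv 2 (Fin n → ℝ)).symm fun i => max (l i) (min (x i) (u i))

/-- The transposed Jacobian `∇h(x)`: the `n × m` matrix whose columns are the gradients
`∇hᵢ(x)`, viewed as a continuous linear map `ℝᵐ → ℝⁿ` (operator norm `‖·‖`). -/
noncomputable def jacobianT {n m : ℕ}
    (h : EuclideanSpace ℝ (Fin n) → EuclideanSpace ℝ (Fin m))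
    (x : EuclideanSpace ℝ (Fin n)) :
    EuclideanSpace ℝ (Fin m) →L[ℝ] EuclideanSpace ℝ (Fin n) :=
  LinearMap.toContinuousLinearMap
    (Matrix.toEuclideanLin
      (Matrix.of fun (i : Fin n) (j : Fin m) => gradient (fun y => h y j) x i))

/-- The squared infeasibility measure `‖h(x)‖² + ‖g(x)₊‖²`. -/
noncomputable def infeas {n m p : ℕ}
    (h : EuclideanSpace ℝ (Fin n) → EuclideanSpace ℝ (Fin m))
    (g : EuclideanSpace ℝ (Fin n) → EuclideanSpace ℝ (Fin p))
    (x : EuclideanSpace ℝ (Fin n)) : ℝ :=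
  (∑ i, h x i ^ 2) + ∑ j, max (g x j) 0 ^ 2

/-- The shifted squared infeasibility measure `‖h(x) + λ/ρ‖² + ‖(g(x) + μ/ρ)₊‖²`. -/
noncomputable def shiftedInfeas {n m p : ℕ}
    (h : EuclideanSpace ℝ (Fin n) → EuclideanSpace ℝ (Fin m))
    (g : EuclideanSpace ℝ (Fin n) → EuclideanSpace ℝ (Fin p))
    (lam : EuclideanSpace ℝ (Fin m)) (mu : EuclideanSpace ℝ (Fin p)) (ρ : ℝ)
    (x : EuclideanSpace ℝ (Fin n)) : ℝ :=
  (∑ i, (h x i + lam i / ρ) ^ 2) + ∑ j, max (g x j + mu j / ρ) 0 ^ 2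

/-!
Both gradients are of the form `∇h(x) a + ∇g(x) b`: the gradient of `φ ∘ h` is the adjoint of
`Dh(x)` applied to `∇φ(h x)`, and the transposed Jacobian is that adjoint. The coefficient vectors
differ by `2λ/ρ` and by `2(g(x)₊ - (g(x) + μ/ρ)₊)`, which is coordinatewise at most `2μ/ρ` since
`t ↦ t₊` is 1-Lipschitz. Hence the two gradients are at most `2 c_lips / ρ` apart, and the
projection onto a box, being nonexpansive, keeps them so.
-/

open Filter Topology InnerProductSpace

lemma EuclideanSpace.norm_le_norm_of_forall_abs_le {ι : Type*} [Fintype ι]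
    {a b : EuclideanSpace ℝ ι} (hab : ∀ i, |a i| ≤ |b i|) : ‖a‖ ≤ ‖b‖ := by
  rw [EuclideanSpace.norm_eq, EuclideanSpace.norm_eq]
  exact Real.sqrt_le_sqrt <| Finset.sum_le_sum fun i _ => by
    simpa only [Real.norm_eq_abs, sq_abs, sq_le_sq] using hab i

lemma abs_clamp_sub_clamp_le (l u a b : ℝ) :
    |max l (min a u) - max l (min b u)| ≤ |a - b| :=
  calc |max l (min a u) - max l (min b u)|
      ≤ max |l - l| |min a u - min b u| := abs_max_sub_max_le_max _ _ _ _
    _ = |min a u - min b u| := by simp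
    _ ≤ max |a - b| |u - u| := abs_min_sub_min_le_max _ _ _ _
    _ = |a - b| := by simp

lemma norm_boxProj_sub_boxProj_le {n : ℕ} (l u a b : EuclideanSpace ℝ (Fin n)) :
    ‖boxProj l u a - boxProj l u b‖ ≤ ‖a - b‖ :=
  EuclideanSpace.norm_le_norm_of_forall_abs_le fun i => abs_clamp_sub_clamp_le _ _ (a i) (b i)

lemma hasDerivAt_max_zero_sq (t : ℝ) :
    HasDerivAt (fun s : ℝ => max s 0 ^ 2) (2 * max t 0) t := by
  rcases lt_trichotomy t 0 with ht | rfl | ht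
  · have hzero : (fun s : ℝ => max s 0 ^ 2) =ᶠ[𝓝 t] fun _ => 0 := by
      filter_upwards [Iio_mem_nhds ht] with s hs
      simp [max_eq_right (Set.mem_Iio.mp hs).le]
    simpa [max_eq_right ht.le] using (hasDerivAt_const t (0 : ℝ)).congr_of_eventuallyEq hzero
  · have hsmall : (fun s : ℝ => max s 0 ^ 2) =o[𝓝 0] fun s => s := by
      refine Asymptotics.IsBigO.trans_isLittleO ?_ (Asymptotics.isLittleO_pow_id one_lt_two)
      refine Asymptotics.IsBigO.of_bound 1 (Eventually.of_forall fun s => ?_)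
      simp only [norm_pow, Real.norm_eq_abs, one_mul]
      exact pow_le_pow_left₀ (abs_nonneg _) (by simpa using abs_max_sub_max_le_abs s 0 0) 2
    simpa [hasDerivAt_iff_isLittleO] using hsmall
  · have hsq : (fun s : ℝ => max s 0 ^ 2) =ᶠ[𝓝 t] fun s => s ^ 2 := by
      filter_upwards [Ioi_mem_nhds ht] with s hs
      simp [max_eq_left (Set.mem_Ioi.mp hs).le]
    simpa [max_eq_left ht.le] using (hasDerivAt_pow 2 t).congr_of_eventuallyEq hsq

namespace HasGradientAt

variable {E F : Type*} [NormedAddCommGroup E] [InnerProductSpace ℝ E] [CompleteSpace E]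
  [NormedAddCommGroup F] [InnerProductSpace ℝ F] [CompleteSpace F] {x : E}

protected theorem add {f g : E → ℝ} {f' g' : E} (hf : HasGradientAt f f' x)
    (hg : HasGradientAt g g' x) : HasGradientAt (fun y => f y + g y) (f' + g') x := by
  rw [hasGradientAt_iff_hasFDerivAt, map_add]
  exact HasFDerivAt.add hf hg

theorem comp_hasFDerivAt {φ : F → ℝ} {φ' : F} {h : E → F} {h' : E →L[ℝ] F}
    (hφ : HasGradientAt φ φ' (h x)) (hh : HasFDerivAt h h' x) :
    HasGradientAt (φ ∘ h) (h'.adjoint φ') x := by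
  have hdual : toDual ℝ E (h'.adjoint φ') = (toDual ℝ F φ').comp h' := by
    ext v
    simp [ContinuousLinearMap.adjoint_inner_left]
  rw [hasGradientAt_iff_hasFDerivAt, hdual]
  exact (hasGradientAt_iff_hasFDerivAt.mp hφ).comp x hh

end HasGradientAt

theorem hasGradientAt_sum_apply {ι : Type*} [Fintype ι] {φ : ι → ℝ → ℝ} {c : ι → ℝ}
    {z : EuclideanSpace ℝ ι} (hφ : ∀ i, HasDerivAt (φ i) (c i) (z i)) :
    HasGradientAt (fun y : EuclideanSpace ℝ ι => ∑ i, φ i (y i)) (WithLp.toLp 2 c) z := by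
  have hdual : toDual ℝ _ (WithLp.toLp 2 c) = ∑ i, c i • EuclideanSpace.proj i := by
    ext v
    simp [PiLp.inner_apply, mul_comm]
  rw [hasGradientAt_iff_hasFDerivAt, hdual]
  exact HasFDerivAt.fun_sum fun i _ =>
    (hφ i).comp_hasFDerivAt z (EuclideanSpace.proj i : EuclideanSpace ℝ ι →L[ℝ] ℝ).hasFDerivAt

theorem jacobianT_eq_adjoint_fderiv {n m : ℕ}
    {h : EuclideanSpace ℝ (Fin n) → EuclideanSpace ℝ (Fin m)} {x : EuclideanSpace ℝ (Fin n)}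
    (hh : DifferentiableAt ℝ h x) : jacobianT h x = (fderiv ℝ h x).adjoint := by
  have hcoord : ∀ j w, ⟪gradient (fun y => h y j) x, w⟫_ℝ = fderiv ℝ h x w j := fun j w => by
    have hj := (EuclideanSpace.proj j : EuclideanSpace ℝ (Fin m) →L[ℝ] ℝ).hasFDerivAt.comp x
      hh.hasFDerivAt
    exact hj.differentiableAt.hasGradientAt.fderiv_apply.symm.trans (congrArg (· w) hj.fderiv)
  rw [ContinuousLinearMap.eq_adjoint_iff]
  intro v w
  simp only [PiLp.inner_apply, Real.inner_apply] at hcoord ⊢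
  simp only [jacobianT, ← hcoord, LinearMap.coe_toContinuousLinearMap',
    Matrix.toLpLin_apply, Matrix.mulVec, dotProduct, Matrix.of_apply,
    Finset.sum_mul, Finset.mul_sum]
  rw [Finset.sum_comm]
  exact Finset.sum_congr rfl fun _ _ => Finset.sum_congr rfl fun _ _ => by ring

section Infeasibility

variable {n m p : ℕ} {h : EuclideanSpace ℝ (Fin n) → EuclideanSpace ℝ (Fin m)}
  {g : EuclideanSpace ℝ (Fin n) → EuclideanSpace ℝ (Fin p)} {x : EuclideanSpace ℝ (Fin n)}

theorem shiftedInfeas_zero (ρ : ℝ) :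
    shiftedInfeas h g 0 0 ρ = infeas h g := by
  funext x
  simp [shiftedInfeas, infeas]

theorem hasGradientAt_shiftedInfeas (hh : DifferentiableAt ℝ h x) (hg : DifferentiableAt ℝ g x)
    (lam : EuclideanSpace ℝ (Fin m)) (mu : EuclideanSpace ℝ (Fin p)) (ρ : ℝ) :
    HasGradientAt (shiftedInfeas h g lam mu ρ)
      (jacobianT h x (WithLp.toLp 2 fun i => 2 * (h x i + lam i / ρ)) +
        jacobianT g x (WithLp.toLp 2 fun j => 2 * max (g x j + mu j / ρ) 0)) x := by
  have hsq : HasGradientAt (fun z : EuclideanSpace ℝ (Fin m) => ∑ i, (z i + lam i / ρ) ^ 2)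
      (WithLp.toLp 2 fun i => 2 * (h x i + lam i / ρ)) (h x) :=
    hasGradientAt_sum_apply fun i => by
      simpa using ((hasDerivAt_id _).add_const (lam i / ρ)).pow 2
  have hpos : HasGradientAt (fun z : EuclideanSpace ℝ (Fin p) => ∑ j, max (z j + mu j / ρ) 0 ^ 2)
      (WithLp.toLp 2 fun j => 2 * max (g x j + mu j / ρ) 0) (g x) :=
    hasGradientAt_sum_apply fun j => by
      simpa using (hasDerivAt_max_zero_sq _).comp _ ((hasDerivAt_id _).add_const (mu j / ρ))
  rw [jacobianT_eq_adjoint_fderiv hh, jacobianT_eq_adjoint_fderiv hg]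
  exact (hsq.comp_hasFDerivAt hh.hasFDerivAt).add (hpos.comp_hasFDerivAt hg.hasFDerivAt)

theorem norm_gradient_infeas_sub_gradient_shiftedInfeas_le (hh : DifferentiableAt ℝ h x)
    (hg : DifferentiableAt ℝ g x) (lam : EuclideanSpace ℝ (Fin m))
    (mu : EuclideanSpace ℝ (Fin p)) (ρ : ℝ) :
    ‖gradient (infeas h g) x - gradient (shiftedInfeas h g lam mu ρ) x‖ ≤
      ‖jacobianT h x‖ * ‖(2 / ρ) • lam‖ + ‖jacobianT g x‖ * ‖(2 / ρ) • mu‖ := by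
  rw [← shiftedInfeas_zero ρ, (hasGradientAt_shiftedInfeas hh hg 0 0 ρ).gradient,
    (hasGradientAt_shiftedInfeas hh hg lam mu ρ).gradient, add_sub_add_comm, ← map_sub, ← map_sub]
  refine (norm_add_le _ _).trans (add_le_add ((jacobianT h x).le_opNorm_of_le ?_)
    ((jacobianT g x).le_opNorm_of_le ?_)) <;>
    refine EuclideanSpace.norm_le_norm_of_forall_abs_le fun i => ?_
  · simp only [PiLp.zero_apply, zero_div, add_zero, PiLp.sub_apply, PiLp.smul_apply, smul_eq_mul,
      abs_mul]
    rw [← abs_mul, ← abs_neg]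
    exact le_of_eq (congrArg abs (by ring))
  · simp only [PiLp.zero_apply, zero_div, add_zero, PiLp.sub_apply, PiLp.smul_apply, smul_eq_mul,
      abs_mul]
    calc |2 * max (g x i) 0 - 2 * max (g x i + mu i / ρ) 0|
        = 2 * |max (g x i) 0 - max (g x i + mu i / ρ) 0| := by rw [← mul_sub, abs_mul, abs_two]
      _ ≤ 2 * |mu i / ρ| := by
        refine mul_le_mul_of_nonneg_left ?_ zero_le_two
        simpa only [sub_add_cancel_left, abs_neg]
          using abs_max_sub_max_le_abs (g x i) (g x i + mu i / ρ) 0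
      _ = |2 / ρ| * |mu i| := by rw [abs_div, abs_div, abs_two]; ring

end Infeasibility

theorem projected_gradient_infeasibility_bound_general
    {n m p : ℕ}
    (h : EuclideanSpace ℝ (Fin n) → EuclideanSpace ℝ (Fin m))
    (g : EuclideanSpace ℝ (Fin n) → EuclideanSpace ℝ (Fin p))
    (hh : ContDiff ℝ 1 h) (hg : ContDiff ℝ 1 g)
    (l u : EuclideanSpace ℝ (Fin n))
    (lamMin lamMax μmax : ℝ)
    (clips : ℝ)
    (hclipsBound :
      ∀ x : EuclideanSpace ℝ (Fin n), (∀ i, x i ∈ Set.Icc (l i) (u i)) →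
        ∀ lam : EuclideanSpace ℝ (Fin m), (∀ i, lam i ∈ Set.Icc lamMin lamMax) →
          ∀ mu : EuclideanSpace ℝ (Fin p), (∀ j, mu j ∈ Set.Icc (0 : ℝ) μmax) →
            ‖jacobianT h x‖ * ‖lam‖ + ‖jacobianT g x‖ * ‖mu‖ ≤ clips) :
    ∀ x : EuclideanSpace ℝ (Fin n), (∀ i, x i ∈ Set.Icc (l i) (u i)) →
      ∀ lam : EuclideanSpace ℝ (Fin m), (∀ i, lam i ∈ Set.Icc lamMin lamMax) →
        ∀ mu : EuclideanSpace ℝ (Fin p), (∀ j, mu j ∈ Set.Icc (0 : ℝ) μmax) →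
          ∀ ρ : ℝ, 0 < ρ →
            ‖boxProj l u (x - gradient (infeas h g) x) - x‖ ≤
              ‖boxProj l u (x - gradient (shiftedInfeas h g lam mu ρ) x) - x‖ +
                2 * clips / ρ := by
  intro x hx lam hlam mu hmu ρ hρ
  have hgrad := norm_gradient_infeas_sub_gradient_shiftedInfeas_le
    (hh.differentiable one_ne_zero x) (hg.differentiable one_ne_zero x) lam mu ρ
  rw [norm_smul, norm_smul, Real.norm_of_nonneg (by positivity), mul_left_comm,
    mul_left_comm ‖jacobianT g x‖, ← mul_add] at hgrad
  set P := boxProj l u (x - gradient (infeas h g) x)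
  set Q := boxProj l u (x - gradient (shiftedInfeas h g lam mu ρ) x)
  calc ‖P - x‖
      ≤ ‖Q - x‖ + ‖P - Q‖ := (norm_sub_le_norm_sub_add_norm_sub P Q x).trans_eq (add_comm _ _)
    _ ≤ ‖Q - x‖ + ‖gradient (infeas h g) x - gradient (shiftedInfeas h g lam mu ρ) x‖ := by
        grw [norm_boxProj_sub_boxProj_le, sub_sub_sub_cancel_left,
          norm_sub_rev (gradient (shiftedInfeas h g lam mu ρ) x)]
    _ ≤ ‖Q - x‖ + 2 / ρ * clips := by grw [hgrad, hclipsBound x hx lam hlam mu hmu]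
    _ = ‖Q - x‖ + 2 * clips / ρ := by rw [div_mul_eq_mul_div]

/-- Lemma 3.6 (Lemma `lemcomplexity4`): the projected gradient of the infeasibility measure
is bounded by the projected gradient of the shifted infeasibility measure plus `2 c_lips / ρ`. -/
theorem projected_gradient_infeasibility_bound
    {n m p : ℕ}
    (h : EuclideanSpace ℝ (Fin n) → EuclideanSpace ℝ (Fin m))
    (g : EuclideanSpace ℝ (Fin n) → EuclideanSpace ℝ (Fin p))
    (hh : ContDiff ℝ 1 h) (hg : ContDiff ℝ 1 g)
    (l u : EuclideanSpace ℝ (Fin n)) (hlu : ∀ i, l i ≤ u i)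
    (lamMin lamMax μmax : ℝ) (hlam : lamMin < lamMax) (hμ : 0 < μmax)
    (clips : ℝ) (hclips : 0 < clips)
    (hclipsBound :
      ∀ x : EuclideanSpace ℝ (Fin n), (∀ i, x i ∈ Set.Icc (l i) (u i)) →
        ∀ lam : EuclideanSpace ℝ (Fin m), (∀ i, lam i ∈ Set.Icc lamMin lamMax) →
          ∀ mu : EuclideanSpace ℝ (Fin p), (∀ j, mu j ∈ Set.Icc (0 : ℝ) μmax) →
            ‖jacobianT h x‖ * ‖lam‖ + ‖jacobianT g x‖ * ‖mu‖ ≤ clips) :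
    ∀ x : EuclideanSpace ℝ (Fin n), (∀ i, x i ∈ Set.Icc (l i) (u i)) →
      ∀ lam : EuclideanSpace ℝ (Fin m), (∀ i, lam i ∈ Set.Icc lamMin lamMax) →
        ∀ mu : EuclideanSpace ℝ (Fin p), (∀ j, mu j ∈ Set.Icc (0 : ℝ) μmax) →
          ∀ ρ : ℝ, 0 < ρ →
            ‖boxProj l u (x - gradient (infeas h g) x) - x‖ ≤
              ‖boxProj l u (x - gradient (shiftedInfeas h g lam mu ρ) x) - x‖ +
                2 * clips / ρ :=
  projected_gradient_infeasibility_bound_general h g hh hg l u lamMin lamMax μmax clips hclipsBound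
end

section
/- Let C ⊆ ℝⁿ be a nonempty closed convex set, P_C the Euclidean projection onto C, x ∈ C, v ∈ ℝⁿ, and 0 < s ≤ 1. Then ‖P_C(x − s v) − x‖ ≤ ‖P_C(x − v) − x‖, where ‖·‖ is the Euclidean norm. That is, for a point of C the norm of the projected step is nondecreasing in the step size; in particular, if ‖P_C(x − v) − x‖ ≤ ε then ‖P_C(x − (1/ρ) v) − x‖ ≤ ε for every ρ ≥ 1. -/
/-!
Write `a = P (x - v) - x` and `b = P (x - s • v) - x`. The variational inequalities of the two
projections, each tested at the other projected point, give `0 ≤ ⟪v + a, b - a⟫` and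
`0 ≤ ⟪s • v + b, a - b⟫`. Adding `s` times the first to the second eliminates `v`, and
Cauchy–Schwarz then gives `(‖b‖ - ‖a‖) * (‖b‖ - s * ‖a‖) ≤ 0`, so `‖b‖ ≤ ‖a‖`.
-/

open RealInnerProductSpace

variable {E : Type*} [NormedAddCommGroup E] [InnerProductSpace ℝ E]

theorem inner_sub_sub_nonpos_of_forall_norm_sub_le {C : Set E} (hC : Convex ℝ C) {y p : E}
    (hp : p ∈ C) (hmin : ∀ z ∈ C, ‖y - p‖ ≤ ‖y - z‖) {z : E} (hz : z ∈ C) :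
    ⟪y - p, z - p⟫ ≤ 0 := by
  have : Nonempty C := ⟨⟨p, hp⟩⟩
  refine (norm_eq_iInf_iff_real_inner_le_zero hC hp).1 (le_antisymm ?_ ?_) z hz
  · exact le_ciInf fun w => hmin w w.2
  · exact ciInf_le ⟨0, Set.forall_mem_range.2 fun w : C => norm_nonneg (y - w)⟩ ⟨p, hp⟩

theorem le_of_mul_sq_add_sq_le_mul {α β s : ℝ} (hα : 0 ≤ α) (hs : s ≤ 1)
    (h : s * α ^ 2 + β ^ 2 ≤ (1 + s) * (α * β)) : β ≤ α := by
  by_contra! hlt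
  have hpos : 0 < (β - α) * (β - s * α) := mul_pos (by linarith) (by nlinarith)
  nlinarith

theorem norm_le_of_inner_add_sub_nonneg {a b v : E} {s : ℝ} (hs0 : 0 ≤ s) (hs1 : s ≤ 1)
    (ha : 0 ≤ ⟪v + a, b - a⟫) (hb : 0 ≤ ⟪s • v + b, a - b⟫) : ‖b‖ ≤ ‖a‖ := by
  have key : s * ‖a‖ ^ 2 + ‖b‖ ^ 2 ≤ (1 + s) * ⟪a, b⟫ := by
    simp only [inner_add_left, inner_sub_right, real_inner_smul_left,
      real_inner_self_eq_norm_sq, real_inner_comm a b] at ha hb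
    nlinarith
  refine le_of_mul_sq_add_sq_le_mul (norm_nonneg a) hs1 (key.trans ?_)
  exact mul_le_mul_of_nonneg_left (real_inner_le_norm a b) (by linarith)

theorem norm_map_sub_smul_sub_le {C : Set E} (hC : Convex ℝ C) {P : E → E}
    (hP : ∀ y, P y ∈ C ∧ ∀ z ∈ C, ‖y - P y‖ ≤ ‖y - z‖) (x v : E) {s : ℝ}
    (hs0 : 0 ≤ s) (hs1 : s ≤ 1) : ‖P (x - s • v) - x‖ ≤ ‖P (x - v) - x‖ := by
  have variational (w z : E) : 0 ≤ ⟪w + (P (x - w) - x), (P z - x) - (P (x - w) - x)⟫ := by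
    rw [sub_sub_sub_cancel_right, show w + (P (x - w) - x) = -(x - w - P (x - w)) by abel,
      inner_neg_left, neg_nonneg]
    exact inner_sub_sub_nonpos_of_forall_norm_sub_le hC (hP _).1 (hP _).2 (hP z).1
  exact norm_le_of_inner_add_sub_nonneg hs0 hs1 (variational v (x - s • v))
    (variational (s • v) (x - v))

theorem projected_step_norm_monotone_general
    {n : ℕ} (C : Set (EuclideanSpace ℝ (Fin n)))
    (hCcv : Convex ℝ C)
    (P : EuclideanSpace ℝ (Fin n) → EuclideanSpace ℝ (Fin n))
    (hP : ∀ y, P y ∈ C ∧ ∀ z ∈ C, ‖y - P y‖ ≤ ‖y - z‖)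
    (x : EuclideanSpace ℝ (Fin n))
    (v : EuclideanSpace ℝ (Fin n)) (s : ℝ) (hs0 : 0 < s) (hs1 : s ≤ 1) :
    ‖P (x - s • v) - x‖ ≤ ‖P (x - v) - x‖ ∧
      ∀ ε ρ : ℝ, 1 ≤ ρ → ‖P (x - v) - x‖ ≤ ε → ‖P (x - (1 / ρ) • v) - x‖ ≤ ε := by
  refine ⟨norm_map_sub_smul_sub_le hCcv hP x v hs0.le hs1, fun ε ρ hρ hε => ?_⟩
  have hρ_inv_le : 1 / ρ ≤ 1 := div_le_one_of_le₀ hρ (by linarith)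
  exact (norm_map_sub_smul_sub_le hCcv hP x v (by positivity) hρ_inv_le).trans hε

/-- For the Euclidean projection `P_C` onto a nonempty closed convex set `C ⊆ ℝⁿ` and a
point `x ∈ C`, the norm of the projected step `‖P_C(x − s v) − x‖` is nondecreasing in the
step size `s ∈ (0,1]`; in particular, if `‖P_C(x − v) − x‖ ≤ ε`, then
`‖P_C(x − (1/ρ) v) − x‖ ≤ ε` for every `ρ ≥ 1`. -/
theorem projected_step_norm_monotone
    {n : ℕ} (C : Set (EuclideanSpace ℝ (Fin n)))
    (hCne : C.Nonempty) (hCcl : IsClosed C) (hCcv : Convex ℝ C)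
    (P : EuclideanSpace ℝ (Fin n) → EuclideanSpace ℝ (Fin n))
    (hP : ∀ y, P y ∈ C ∧ ∀ z ∈ C, ‖y - P y‖ ≤ ‖y - z‖)
    (x : EuclideanSpace ℝ (Fin n)) (hx : x ∈ C)
    (v : EuclideanSpace ℝ (Fin n)) (s : ℝ) (hs0 : 0 < s) (hs1 : s ≤ 1) :
    ‖P (x - s • v) - x‖ ≤ ‖P (x - v) - x‖ ∧
      ∀ ε ρ : ℝ, 1 ≤ ρ → ‖P (x - v) - x‖ ≤ ε → ‖P (x - (1 / ρ) • v) - x‖ ≤ ε :=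
  projected_step_norm_monotone_general C hCcv P hP x v s hs0 hs1
end
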